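/- For κ > 0 and α > 0 with α ≠ 1, define H(κ,α) = ((e^{κα}−1)·κ^{α−1} / (α·(e^{κ}−1)^α))^{1/(1−α)}. Then H(κ,α) → 1 as κ → 0⁺ and H(κ,α) → 0 as κ → ∞. -/

import Mathlib

/-!
With `g = renyiBase α` we have `H = g^{1/(1-α)}`.
Near `0`, `g κ = r(κα) / r(κ)^α` with `r x = (e^x - 1)/x → 1`, hence `g → 1` and `H → 1`.
Near `∞`, factoring `e^{κα}` out of numerator and denominator gives
`g κ = c κ · κ^{α-1}` with `c κ → 1/α`, hence `H κ = (c κ)^{1/(1-α)} · κ⁻¹ → 0`.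
-/

open Real Filter Topology

noncomputable def renyiBase (α κ : ℝ) : ℝ :=
  (exp (κ * α) - 1) * κ ^ (α - 1) / (α * (exp κ - 1) ^ α)

lemma tendsto_exp_sub_one_div_self_nhdsNE :
    Tendsto (fun x : ℝ => (exp x - 1) / x) (𝓝[≠] 0) (𝓝 1) := by
  have h := hasDerivAt_iff_tendsto_slope.1 (hasDerivAt_exp 0)
  rw [exp_zero] at h
  exact h.congr fun x => by simp [slope_def_field]

lemma tendsto_mul_const_nhdsNE_zero {c : ℝ} (hc : c ≠ 0) :
    Tendsto (fun κ : ℝ => κ * c) (𝓝[≠] 0) (𝓝[≠] 0) := by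
  refine tendsto_nhdsWithin_of_tendsto_nhds_of_eventually_within _ ?_ ?_
  · simpa using ((continuous_mul_const c).tendsto 0).mono_left nhdsWithin_le_nhds
  · filter_upwards [self_mem_nhdsWithin] with κ hκ
    exact mul_ne_zero hκ hc

lemma exp_sub_one_pos {x : ℝ} (hx : 0 < x) : 0 < exp x - 1 :=
  sub_pos.2 (one_lt_exp_iff.2 hx)

lemma renyiBase_eq_div_rpow {α κ : ℝ} (hα : α ≠ 0) (hκ : 0 < κ) :
    renyiBase α κ = ((exp (κ * α) - 1) / (κ * α)) / ((exp κ - 1) / κ) ^ α := by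
  have hE : 0 < exp κ - 1 := exp_sub_one_pos hκ
  rw [renyiBase, div_rpow hE.le hκ.le, rpow_sub_one hκ.ne']
  have : 0 < κ ^ α := rpow_pos_of_pos hκ α
  have : 0 < (exp κ - 1) ^ α := rpow_pos_of_pos hE α
  field_simp

lemma tendsto_renyiBase_nhdsGT_zero {α : ℝ} (hα : α ≠ 0) :
    Tendsto (renyiBase α) (𝓝[>] 0) (𝓝 1) := by
  have hGT : 𝓝[>] (0 : ℝ) ≤ 𝓝[≠] 0 := nhdsWithin_mono _ fun _ h => ne_of_gt h
  have hnum := (tendsto_exp_sub_one_div_self_nhdsNE.comp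
    (tendsto_mul_const_nhdsNE_zero hα)).mono_left hGT
  have hden := (tendsto_exp_sub_one_div_self_nhdsNE.mono_left hGT).rpow_const (p := α)
    (Or.inl one_ne_zero)
  rw [one_rpow] at hden
  have := hnum.div hden one_ne_zero
  rw [div_one] at this
  refine this.congr' ?_
  filter_upwards [self_mem_nhdsWithin] with κ hκ
  exact (renyiBase_eq_div_rpow hα hκ).symm

lemma one_sub_exp_neg_pos {x : ℝ} (hx : 0 < x) : 0 < 1 - exp (-x) :=
  sub_pos.2 (exp_lt_one_iff.2 (neg_neg_of_pos hx))

lemma renyiBase_eq_mul_rpow {α κ : ℝ} (hα : α ≠ 0) (hκ : 0 < κ) :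
    renyiBase α κ = (1 - exp (-(κ * α))) / (α * (1 - exp (-κ)) ^ α) * κ ^ (α - 1) := by
  have hfactor : ∀ x, exp x - 1 = exp x * (1 - exp (-x)) := fun x => by
    rw [mul_sub, mul_one, ← exp_add, add_neg_cancel, exp_zero]
  have hpos : 0 < 1 - exp (-κ) := one_sub_exp_neg_pos hκ
  rw [renyiBase, hfactor, hfactor κ, mul_rpow (exp_pos κ).le hpos.le, ← exp_mul]
  have : 0 < (1 - exp (-κ)) ^ α := rpow_pos_of_pos hpos α
  field_simp

lemma tendsto_renyiBase_rpow_atTop {α : ℝ} (hα : 0 < α) (hα1 : α ≠ 1) :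
    Tendsto (fun κ => renyiBase α κ ^ (1 / (1 - α))) atTop (𝓝 0) := by
  have hdecay : Tendsto (fun x : ℝ => 1 - exp (-x)) atTop (𝓝 1) := by
    simpa using tendsto_const_nhds.sub (tendsto_exp_atBot.comp tendsto_neg_atTop_atBot)
  have hc : Tendsto (fun κ => (1 - exp (-(κ * α))) / (α * (1 - exp (-κ)) ^ α)) atTop
      (𝓝 (1 / α)) := by
    have hden := (hdecay.rpow_const (p := α) (Or.inl one_ne_zero)).const_mul α
    rw [one_rpow, mul_one] at hden
    exact (hdecay.comp (tendsto_id.atTop_mul_const hα)).div hden hα.ne'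
  have hlim := (hc.rpow_const (p := 1 / (1 - α)) (Or.inl (by positivity))).mul
    tendsto_inv_atTop_zero
  rw [mul_zero] at hlim
  refine hlim.congr' ?_
  filter_upwards [eventually_gt_atTop 0] with κ hκ
  have hc_nonneg : 0 ≤ (1 - exp (-(κ * α))) / (α * (1 - exp (-κ)) ^ α) := by
    have := one_sub_exp_neg_pos hκ
    have := one_sub_exp_neg_pos (mul_pos hκ hα)
    positivity
  have hexponent : (α - 1) * (1 / (1 - α)) = -1 := by
    field_simp [sub_ne_zero.2 hα1.symm]
    ring
  rw [renyiBase_eq_mul_rpow hα.ne' hκ, mul_rpow hc_nonneg (rpow_nonneg hκ.le _),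
    ← rpow_mul hκ.le, hexponent, rpow_neg_one]

theorem stmt_8 (α : ℝ) (hα : 0 < α) (hα1 : α ≠ 1) :
    Filter.Tendsto
      (fun κ : ℝ => ((Real.exp (κ * α) - 1) * κ ^ (α - 1) /
          (α * (Real.exp κ - 1) ^ α)) ^ (1 / (1 - α)))
      (nhdsWithin 0 (Set.Ioi 0)) (nhds 1) ∧
    Filter.Tendsto
      (fun κ : ℝ => ((Real.exp (κ * α) - 1) * κ ^ (α - 1) /
          (α * (Real.exp κ - 1) ^ α)) ^ (1 / (1 - α)))
      Filter.atTop (nhds 0) := by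
  refine ⟨?_, tendsto_renyiBase_rpow_atTop hα hα1⟩
  have h := (tendsto_renyiBase_nhdsGT_zero hα.ne').rpow_const (p := 1 / (1 - α))
    (Or.inl one_ne_zero)
  rwa [one_rpow] at h
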